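/- (V2-operation soundness) Let G be a finite graph with model E₃^T, and x ∈ V ∖ (T ∪ {u,v}) a vertex of degree 2 with neighbors y, z. Let G₁ = G ∖ x and G₂ = G/xy (with T unchanged, the contracted vertex inheriting membership from y). Conditioned on edges xy and xz having different colors, the connection probabilities P(u₀ → v_i) in G equal those in G₁; conditioned on xy and xz having the same color, they equal those in G₂. Hence P_G(u₀→v_i) = (1/2) P_{G₁}(u₀→v_i) + (1/2) P_{G₂}(u₀→v_i) for i = 0,1, and if G₁ and G₂ satisfy the bunkbed inequality then so does G. -/

import Mathlib

/-!
In the coloured graph, `x ∉ T` has only the two copies `(x, β)`, and `(x, β)` is adjacent exactly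
to the far ends of those of `e₁ = xy`, `e₂ = xz` whose colour is `β`. If `e₁` and `e₂` have
different colours, each copy of `x` is a leaf, so it can be dropped without changing connections
between other vertices: this is `G ∖ x`. If they have the same colour `β`, the path `y x z` in
layer `β` acts exactly as the edge `yz` of `G / xy`. Flipping the colour of `e₁` exchanges the two
events and leaves the colours of all edges of `G ∖ x` and `G / xy` unchanged, so each event has
half of the colourings, and averaging a function of those colours over the colourings of `G` is the
same as averaging it over the colourings of `G ∖ x` or `G / xy`.
-/

open scoped Classical

noncomputable section

/-- Indicator of a proposition, as a real number. -/
def pInd (P : Prop) : ℝ := if P then 1 else 0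

/-- A finite multigraph without loops on vertex set `V`. -/
structure Multigraph (V : Type) where
  E : Type
  fintypeE : Fintype E
  decEqE : DecidableEq E
  ends : E → Sym2 V
  not_isDiag : ∀ e, ¬ (ends e).IsDiag

attribute [instance] Multigraph.fintypeE Multigraph.decEqE

variable {V : Type}

/-- Colored presence graph of model E₃ on a multigraph: the copy of edge `e` lives in
the layer given by its color `c e`; vertical edges at `T`. -/
def Multigraph.ccGraph (M : Multigraph V) (c : M.E → Bool) (T : Set V) :
    SimpleGraph (V × Bool) where
  Adj a b := (a.2 = b.2 ∧ ∃ e, M.ends e = s(a.1, b.1) ∧ c e = a.2) ∨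
    (a.1 = b.1 ∧ a.2 ≠ b.2 ∧ a.1 ∈ T)
  symm := by
    constructor
    intro a b h
    rcases h with ⟨h1, e, he, hc⟩ | ⟨h1, h2, h3⟩
    · exact Or.inl ⟨h1.symm, e, by rwa [Sym2.eq_swap], by rwa [← h1]⟩
    · exact Or.inr ⟨h1.symm, Ne.symm h2, h1 ▸ h3⟩
  loopless := by
    constructor
    rintro a (⟨h1, e, he, hc⟩ | ⟨h1, h2, h3⟩)
    · exact M.not_isDiag e (by rw [he]; exact Sym2.mk_isDiag_iff.mpr rfl)
    · exact h2 rfl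

/-- Connection probability in model E₃^T on a multigraph. -/
def PE3M (M : Multigraph V) (T : Set V) (x y : V × Bool) : ℝ :=
  (∑ c : M.E → Bool, pInd ((M.ccGraph c T).Reachable x y)) / 2 ^ Fintype.card M.E

/-- Restriction of a multigraph to the edges satisfying `P` (edge deletion). -/
def Multigraph.restrict (M : Multigraph V) (P : M.E → Prop) : Multigraph V where
  E := {e : M.E // P e}
  fintypeE := Subtype.fintype _
  decEqE := inferInstance
  ends e := M.ends e.1
  not_isDiag e := M.not_isDiag e.1

/-- Contraction of the vertex `x` into the vertex `y`: every edge endpoint equal to `x`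
is renamed `y`, and the edges that become loops are removed. -/
def Multigraph.contract [DecidableEq V] (M : Multigraph V) (x y : V) : Multigraph V where
  E := {e : M.E // ¬ (Sym2.map (fun w => if w = x then y else w) (M.ends e)).IsDiag}
  fintypeE := Subtype.fintype _
  decEqE := inferInstance
  ends e := Sym2.map (fun w => if w = x then y else w) (M.ends e.1)
  not_isDiag e := e.2

theorem SimpleGraph.Reachable.map_of_adj_reachable {V W : Type*} {G : SimpleGraph V}
    {H : SimpleGraph W} (f : V → W) (hf : ∀ a b, G.Adj a b → H.Reachable (f a) (f b))
    {a b : V} (h : G.Reachable a b) : H.Reachable (f a) (f b) := by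
  rw [SimpleGraph.reachable_iff_reflTransGen] at h ⊢
  exact Relation.ReflTransGen.lift' f
    (fun a b hab => (SimpleGraph.reachable_iff_reflTransGen _ _).mp (hf a b hab)) _ _ h

theorem two_pow_card_eq_two_mul {E : Type} [Fintype E] (e : E) :
    (2 : ℝ) ^ Fintype.card E = 2 * 2 ^ (Fintype.card E - 1) := by
  rw [← pow_succ', Nat.sub_add_cancel (Fintype.card_pos_iff.mpr ⟨e⟩)]

section Colorings

variable {E : Type} [Fintype E] [DecidableEq E] {e e' : E}

theorem sum_comp_div_two_pow_of_injective {S : Type} [Fintype S] [DecidableEq S] {ι : S → E}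
    (hι : ι.Injective) (g : (S → Bool) → ℝ) :
    (∑ c : E → Bool, g (c ∘ ι)) / 2 ^ Fintype.card E = (∑ d, g d) / 2 ^ Fintype.card S := by
  let split : (E → Bool) ≃ (S → Bool) × ({e // e ∉ Set.range ι} → Bool) :=
    (Equiv.piEquivPiSubtypeProd (· ∈ Set.range ι) fun _ => Bool).trans
      (Equiv.prodCongr ((Equiv.ofInjective ι hι).arrowCongr (Equiv.refl Bool)).symm
        (Equiv.refl _))
  have hcard : (2 : ℝ) ^ Fintype.card E =
      2 ^ Fintype.card S * 2 ^ Fintype.card {e // e ∉ Set.range ι} := by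
    have := Fintype.card_congr split
    simp only [Fintype.card_prod, Fintype.card_fun, Fintype.card_bool] at this
    exact_mod_cast this
  rw [Fintype.sum_equiv split (fun c => g (c ∘ ι)) (fun t => g t.1) fun _ => rfl,
    Fintype.sum_prod_type, hcard]
  simp only [Finset.sum_const, Finset.card_univ, Fintype.card_fun, Fintype.card_bool,
    nsmul_eq_mul, ← Finset.mul_sum]
  push_cast
  field_simp

theorem sum_ite_apply_eq_add_sum_ite_apply_ne (e e' : E) (G : (E → Bool) → ℝ) :
    (∑ c : E → Bool, if c e = c e' then G c else 0) +
      (∑ c : E → Bool, if c e ≠ c e' then G c else 0) = ∑ c, G c := by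
  rw [← Finset.sum_add_distrib]
  exact Finset.sum_congr rfl fun c _ => by split_ifs <;> simp_all

theorem sum_ite_apply_eq_eq_sum_ite_apply_ne (hne : e ≠ e') (G : (E → Bool) → ℝ)
    (hG : ∀ c b, G (Function.update c e b) = G c) :
    (∑ c : E → Bool, if c e = c e' then G c else 0) =
      ∑ c : E → Bool, if c e ≠ c e' then G c else 0 := by
  let flip : (E → Bool) → E → Bool := fun c => Function.update c e (!c e)
  have hflip : Function.Involutive flip := fun c => by simp [flip]
  refine Fintype.sum_equiv hflip.toPerm _ _ fun c => ?_
  simp [flip, hne.symm, hG]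

theorem sum_ite_apply_ne_div_two_pow_pred (hne : e ≠ e') (G : (E → Bool) → ℝ)
    (hG : ∀ c b, G (Function.update c e b) = G c) :
    (∑ c : E → Bool, if c e ≠ c e' then G c else 0) / 2 ^ (Fintype.card E - 1) =
      (∑ c, G c) / 2 ^ Fintype.card E := by
  rw [← sum_ite_apply_eq_add_sum_ite_apply_ne e e' G, sum_ite_apply_eq_eq_sum_ite_apply_ne hne G hG,
    two_pow_card_eq_two_mul e]
  field_simp
  ring

theorem sum_ite_apply_eq_div_two_pow_pred (hne : e ≠ e') (G : (E → Bool) → ℝ)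
    (hG : ∀ c b, G (Function.update c e b) = G c) :
    (∑ c : E → Bool, if c e = c e' then G c else 0) / 2 ^ (Fintype.card E - 1) =
      (∑ c, G c) / 2 ^ Fintype.card E := by
  rw [sum_ite_apply_eq_eq_sum_ite_apply_ne hne G hG, sum_ite_apply_ne_div_two_pow_pred hne G hG]

end Colorings

theorem Sym2.map_ite_eq_self_of_not_mem {α : Type*} [DecidableEq α] {x : α} (y : α) {s : Sym2 α}
    (hx : x ∉ s) : Sym2.map (fun w => if w = x then y else w) s = s :=
  (Sym2.map_congr (g := id) fun _ hw => if_neg (ne_of_mem_of_not_mem hw hx)).trans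
    (congrFun Sym2.map_id s)

namespace Multigraph

theorem ne_of_ends_eq {M : Multigraph V} {e : M.E} {a b : V} (h : M.ends e = s(a, b)) :
    a ≠ b := fun hab => M.not_isDiag e (by rw [h, Sym2.mk_isDiag_iff, hab])

theorem ccGraph_restrict_le (M : Multigraph V) (P : M.E → Prop) (c : M.E → Bool) (T : Set V) :
    (M.restrict P).ccGraph (fun e => c e.1) T ≤ M.ccGraph c T := by
  rintro a b (⟨hab, e, he, hc⟩ | hv)
  · exact Or.inl ⟨hab, e.1, he, hc⟩
  · exact Or.inr hv

section DegreeTwo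

variable {M : Multigraph V} {T : Set V} {x y z : V} {e₁ e₂ : M.E}
  (h₁ : M.ends e₁ = s(x, y)) (h₂ : M.ends e₂ = s(x, z))
  (hdeg : ∀ e : M.E, x ∈ M.ends e → e = e₁ ∨ e = e₂)

include h₁ h₂

theorem ne_of_ends_eq_of_ne (hyz : y ≠ z) : e₁ ≠ e₂ := by
  rintro rfl
  exact hyz (Sym2.congr_right.mp (h₁.symm.trans h₂))

include hdeg

theorem isDiag_map_contract_iff [DecidableEq V] (hyz : y ≠ z) (e : M.E) :
    (Sym2.map (fun w => if w = x then y else w) (M.ends e)).IsDiag ↔ e = e₁ := by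
  by_cases hx : x ∈ M.ends e
  · rcases hdeg e hx with rfl | rfl
    · simp [h₁]
    · simp [h₂, (ne_of_ends_eq h₂).symm, hyz, (ne_of_ends_eq_of_ne h₁ h₂ hyz).symm]
  · rw [Sym2.map_ite_eq_self_of_not_mem y hx]
    exact iff_of_false (M.not_isDiag e) (by rintro rfl; simp [h₁] at hx)

theorem reachable_restrict_of_reachable (hxT : x ∉ T) {c : M.E → Bool} (hc : c e₁ ≠ c e₂)
    {a b : V × Bool} (ha : a.1 ≠ x) (hb : b.1 ≠ x) (h : (M.ccGraph c T).Reachable a b) :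
    ((M.restrict fun e => x ∉ M.ends e).ccGraph (fun e => c e.1) T).Reachable a b := by
  -- `(x, β)` has a single neighbour, across whichever of `e₁, e₂` has colour `β`
  let f : V × Bool → V × Bool := fun w =>
    if w.1 = x then (if c e₁ = w.2 then y else z, w.2) else w
  have hxy := ne_of_ends_eq h₁
  have hxz := ne_of_ends_eq h₂
  suffices hf : ∀ p q, (M.ccGraph c T).Adj p q →
      ((M.restrict fun e => x ∉ M.ends e).ccGraph (fun e => c e.1) T).Reachable (f p) (f q) by
    simpa [f, ha, hb] using h.map_of_adj_reachable f hf
  rintro ⟨a, α⟩ ⟨b, β⟩ (⟨rfl : α = β, e, hab, hce⟩ | hv)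
  · by_cases hx : x ∈ M.ends e
    · rcases hdeg e hx with rfl | rfl
      · rw [h₁] at hab
        rcases Sym2.eq_iff.mp hab with ⟨rfl, rfl⟩ | ⟨rfl, rfl⟩ <;> simp [f, hce, hxy.symm]
      · rw [h₂] at hab
        have : c e₁ ≠ α := fun h => hc (h.trans hce.symm)
        rcases Sym2.eq_iff.mp hab with ⟨rfl, rfl⟩ | ⟨rfl, rfl⟩ <;> simp [f, this, hxz.symm]
    · have hab' : a ≠ x ∧ b ≠ x := by
        rw [hab, Sym2.mem_iff] at hx
        exact ⟨fun h => hx (Or.inl h.symm), fun h => hx (Or.inr h.symm)⟩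
      simpa [f, hab'] using SimpleGraph.Adj.reachable (Or.inl ⟨rfl, ⟨e, hx⟩, hab, hce⟩)
  · have hax : a ≠ x := fun h => hxT (h ▸ hv.2.2)
    have hbx : b ≠ x := fun h => hax (hv.1.trans h)
    simpa [f, hax, hbx] using SimpleGraph.Adj.reachable (Or.inr hv)

theorem reachable_contract_of_reachable [DecidableEq V] (hyz : y ≠ z) (hxT : x ∉ T)
    {c : M.E → Bool} {a b : V × Bool} (ha : a.1 ≠ x) (hb : b.1 ≠ x)
    (h : (M.ccGraph c T).Reachable a b) :
    ((M.contract x y).ccGraph (fun e => c e.1) T).Reachable a b := by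
  let f : V × Bool → V × Bool := fun w => (if w.1 = x then y else w.1, w.2)
  have hxy := ne_of_ends_eq h₁
  suffices hf : ∀ p q, (M.ccGraph c T).Adj p q →
      ((M.contract x y).ccGraph (fun e => c e.1) T).Reachable (f p) (f q) by
    simpa [f, ha, hb] using h.map_of_adj_reachable f hf
  rintro ⟨a, α⟩ ⟨b, β⟩ (⟨rfl : α = β, e, hab, hce⟩ | hv)
  · by_cases he : e = e₁
    · subst he
      rw [h₁] at hab
      rcases Sym2.eq_iff.mp hab with ⟨rfl, rfl⟩ | ⟨rfl, rfl⟩ <;> simp [f, hxy.symm]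
    · have hmem := (isDiag_map_contract_iff h₁ h₂ hdeg hyz e).not.mpr he
      refine SimpleGraph.Adj.reachable (Or.inl ⟨rfl, ⟨e, hmem⟩, ?_, hce⟩)
      change Sym2.map _ (M.ends e) = _
      rw [hab, Sym2.map_mk]
  · have hax : a ≠ x := fun h => hxT (h ▸ hv.2.2)
    have hbx : b ≠ x := fun h => hax (hv.1.trans h)
    simpa [f, hax, hbx] using SimpleGraph.Adj.reachable (Or.inr hv)

theorem reachable_of_reachable_contract [DecidableEq V] {c : M.E → Bool} (hc : c e₁ = c e₂)
    {a b : V × Bool} (h : ((M.contract x y).ccGraph (fun e => c e.1) T).Reachable a b) :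
    (M.ccGraph c T).Reachable a b := by
  suffices hf : ∀ p q, ((M.contract x y).ccGraph (fun e => c e.1) T).Adj p q →
      (M.ccGraph c T).Reachable (id p) (id q) from h.map_of_adj_reachable id hf
  rintro ⟨p, π⟩ ⟨q, κ⟩ (⟨rfl : π = κ, ⟨e, he⟩, hpq, hce⟩ | hv)
  · change Sym2.map _ (M.ends e) = _ at hpq
    change c e = π at hce
    by_cases hx : x ∈ M.ends e
    · have he₂ : e = e₂ := (hdeg e hx).resolve_left fun h => he (by simp [h, h₁])
      subst e hce
      -- the contracted edge `yz` is the path `y x z` of colour `c e₁ = c e₂`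
      have hyx : (M.ccGraph c T).Adj (y, c e₂) (x, c e₂) :=
        Or.inl ⟨rfl, e₁, by rw [h₁, Sym2.eq_swap], hc⟩
      have hxz : (M.ccGraph c T).Adj (x, c e₂) (z, c e₂) := Or.inl ⟨rfl, e₂, h₂, rfl⟩
      have hyz := hyx.reachable.trans hxz.reachable
      rw [h₂, Sym2.map_mk, if_pos rfl, if_neg (ne_of_ends_eq h₂).symm] at hpq
      rcases Sym2.eq_iff.mp hpq with ⟨rfl, rfl⟩ | ⟨rfl, rfl⟩
      · exact hyz
      · exact hyz.symm
    · rw [Sym2.map_ite_eq_self_of_not_mem y hx] at hpq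
      exact SimpleGraph.Adj.reachable (Or.inl ⟨rfl, e, hpq, hce⟩)
  · exact SimpleGraph.Adj.reachable (Or.inr hv)

theorem sum_ite_ne_div_eq_PE3M_restrict (hne : e₁ ≠ e₂) (hxT : x ∉ T) {a b : V × Bool}
    (ha : a.1 ≠ x) (hb : b.1 ≠ x) :
    (∑ c : M.E → Bool, if c e₁ ≠ c e₂ then pInd ((M.ccGraph c T).Reachable a b) else 0) /
      2 ^ (Fintype.card M.E - 1) = PE3M (M.restrict fun e => x ∉ M.ends e) T a b := by
  set G₁ := M.restrict fun e => x ∉ M.ends e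
  have hreach : ∀ c : M.E → Bool, c e₁ ≠ c e₂ → ((M.ccGraph c T).Reachable a b ↔
      (G₁.ccGraph (fun e => c e.1) T).Reachable a b) := fun c hc =>
    ⟨reachable_restrict_of_reachable h₁ h₂ hdeg hxT hc ha hb,
      fun h => h.mono (M.ccGraph_restrict_le _ c T)⟩
  have hinv : ∀ (c : M.E → Bool) b, (fun e : G₁.E => Function.update c e₁ b e.1) =
      fun e => c e.1 := fun c b => funext fun e =>
    Function.update_of_ne (fun he => e.2 (by simp [he, h₁])) b c
  rw [Finset.sum_congr rfl fun c _ => ite_congr rfl (fun hc => by rw [hreach c hc]) fun _ => rfl,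
    sum_ite_apply_ne_div_two_pow_pred hne _ fun c b => by rw [hinv], PE3M]
  exact sum_comp_div_two_pow_of_injective (S := G₁.E) Subtype.val_injective
    fun d => pInd ((G₁.ccGraph d T).Reachable a b)

theorem sum_ite_eq_div_eq_PE3M_contract [DecidableEq V] (hyz : y ≠ z) (hxT : x ∉ T)
    {a b : V × Bool} (ha : a.1 ≠ x) (hb : b.1 ≠ x) :
    (∑ c : M.E → Bool, if c e₁ = c e₂ then pInd ((M.ccGraph c T).Reachable a b) else 0) /
      2 ^ (Fintype.card M.E - 1) = PE3M (M.contract x y) T a b := by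
  set G₂ := M.contract x y
  have hreach : ∀ c : M.E → Bool, c e₁ = c e₂ → ((M.ccGraph c T).Reachable a b ↔
      (G₂.ccGraph (fun e => c e.1) T).Reachable a b) := fun c hc =>
    ⟨reachable_contract_of_reachable h₁ h₂ hdeg hyz hxT ha hb,
      reachable_of_reachable_contract h₁ h₂ hdeg hc⟩
  have hinv : ∀ (c : M.E → Bool) b, (fun e : G₂.E => Function.update c e₁ b e.1) =
      fun e => c e.1 := fun c b => funext fun e =>
    Function.update_of_ne (fun he => e.2 (by simp [he, h₁])) b c
  rw [Finset.sum_congr rfl fun c _ => ite_congr rfl (fun hc => by rw [hreach c hc]) fun _ => rfl,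
    sum_ite_apply_eq_div_two_pow_pred (ne_of_ends_eq_of_ne h₁ h₂ hyz) _
      fun c b => by rw [hinv], PE3M]
  exact sum_comp_div_two_pow_of_injective (S := G₂.E) Subtype.val_injective
    fun d => pInd ((G₂.ccGraph d T).Reachable a b)

theorem PE3M_eq_add_div_two [DecidableEq V] (hyz : y ≠ z) (hxT : x ∉ T) {a b : V × Bool}
    (ha : a.1 ≠ x) (hb : b.1 ≠ x) :
    PE3M M T a b = (PE3M (M.restrict fun e => x ∉ M.ends e) T a b +
      PE3M (M.contract x y) T a b) / 2 := by
  rw [PE3M, ← sum_ite_apply_eq_add_sum_ite_apply_ne e₁ e₂,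
    ← sum_ite_ne_div_eq_PE3M_restrict h₁ h₂ hdeg (ne_of_ends_eq_of_ne h₁ h₂ hyz) hxT ha hb,
    ← sum_ite_eq_div_eq_PE3M_contract h₁ h₂ hdeg hyz hxT ha hb, two_pow_card_eq_two_mul e₁]
  field_simp
  ring

end DegreeTwo

end Multigraph

theorem PE3M_V2_operation_general [DecidableEq V] (M : Multigraph V) (T : Set V)
    (u v x y z : V) (hxT : x ∉ T) (hxu : x ≠ u) (hxv : x ≠ v) (hyz : y ≠ z)
    (e₁ e₂ : M.E)
    (h₁ : M.ends e₁ = s(x, y)) (h₂ : M.ends e₂ = s(x, z))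
    (hdeg : ∀ e : M.E, x ∈ M.ends e → e = e₁ ∨ e = e₂) :
    (∀ i : Bool,
      (∑ c : M.E → Bool,
          if c e₁ ≠ c e₂ then pInd ((M.ccGraph c T).Reachable (u, false) (v, i)) else 0) /
        2 ^ (Fintype.card M.E - 1) =
      PE3M (M.restrict (fun e => x ∉ M.ends e)) T (u, false) (v, i)) ∧
    (∀ i : Bool,
      (∑ c : M.E → Bool,
          if c e₁ = c e₂ then pInd ((M.ccGraph c T).Reachable (u, false) (v, i)) else 0) /
        2 ^ (Fintype.card M.E - 1) =
      PE3M (M.contract x y) T (u, false) (v, i)) ∧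
    (∀ i : Bool,
      PE3M M T (u, false) (v, i) =
        (PE3M (M.restrict (fun e => x ∉ M.ends e)) T (u, false) (v, i) +
          PE3M (M.contract x y) T (u, false) (v, i)) / 2) ∧
    ((PE3M (M.restrict (fun e => x ∉ M.ends e)) T (u, false) (v, false) ≥
        PE3M (M.restrict (fun e => x ∉ M.ends e)) T (u, false) (v, true)) →
      (PE3M (M.contract x y) T (u, false) (v, false) ≥
        PE3M (M.contract x y) T (u, false) (v, true)) →
      PE3M M T (u, false) (v, false) ≥ PE3M M T (u, false) (v, true)) := by
  have hsplit := fun i : Bool =>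
    Multigraph.PE3M_eq_add_div_two (T := T) (a := (u, false)) (b := (v, i)) h₁ h₂ hdeg hyz hxT
      hxu.symm hxv.symm
  have hne := Multigraph.ne_of_ends_eq_of_ne h₁ h₂ hyz
  refine ⟨fun _ => Multigraph.sum_ite_ne_div_eq_PE3M_restrict h₁ h₂ hdeg hne hxT hxu.symm hxv.symm,
    fun _ => Multigraph.sum_ite_eq_div_eq_PE3M_contract h₁ h₂ hdeg hyz hxT hxu.symm hxv.symm,
    hsplit, fun hdel hcon => ?_⟩
  rw [hsplit, hsplit]
  linarith

/-- V2-operation: let `x ∉ T ∪ {u,v}` have degree 2, with incident edges `e₁ = xy` and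
`e₂ = xz`. Conditioned on `e₁, e₂ having different colors, the E₃ connection
probabilities equal those of `G₁ = G ∖ x`; conditioned on equal colors they equal those
of `G₂ = G/xy`; hence `P_G = (P_{G₁} + P_{G₂})/2`, and the bunkbed inequality for `G₁`
and `G₂` implies it for `G`. -/
theorem PE3M_V2_operation [DecidableEq V] (M : Multigraph V) (T : Set V)
    (u v x y z : V) (hxT : x ∉ T) (hxu : x ≠ u) (hxv : x ≠ v) (hyz : y ≠ z)
    (e₁ e₂ : M.E) (he : e₁ ≠ e₂)
    (h₁ : M.ends e₁ = s(x, y)) (h₂ : M.ends e₂ = s(x, z))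
    (hdeg : ∀ e : M.E, x ∈ M.ends e → e = e₁ ∨ e = e₂) :
    (∀ i : Bool,
      (∑ c : M.E → Bool,
          if c e₁ ≠ c e₂ then pInd ((M.ccGraph c T).Reachable (u, false) (v, i)) else 0) /
        2 ^ (Fintype.card M.E - 1) =
      PE3M (M.restrict (fun e => x ∉ M.ends e)) T (u, false) (v, i)) ∧
    (∀ i : Bool,
      (∑ c : M.E → Bool,
          if c e₁ = c e₂ then pInd ((M.ccGraph c T).Reachable (u, false) (v, i)) else 0) /
        2 ^ (Fintype.card M.E - 1) =
      PE3M (M.contract x y) T (u, false) (v, i)) ∧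
    (∀ i : Bool,
      PE3M M T (u, false) (v, i) =
        (PE3M (M.restrict (fun e => x ∉ M.ends e)) T (u, false) (v, i) +
          PE3M (M.contract x y) T (u, false) (v, i)) / 2) ∧
    ((PE3M (M.restrict (fun e => x ∉ M.ends e)) T (u, false) (v, false) ≥
        PE3M (M.restrict (fun e => x ∉ M.ends e)) T (u, false) (v, true)) →
      (PE3M (M.contract x y) T (u, false) (v, false) ≥
        PE3M (M.contract x y) T (u, false) (v, true)) →
      PE3M M T (u, false) (v, false) ≥ PE3M M T (u, false) (v, true)) :=
  PE3M_V2_operation_general M T u v x y z hxT hxu hxv hyz e₁ e₂ h₁ h₂ hdeg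

end
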